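/- Let 𝒢 be a GRN with associated PRN ℛ, and let σ₁, σ₂ be two distinct appendage nodes of 𝒢 such that there is an appendage path from σ₁ to σ₂ in 𝒢. Then (σ₁,P) and (σ₂,R) are appendage nodes of ℛ and there is an appendage path from (σ₁,P) to (σ₂,R) in ℛ. -/

import Mathlib

/-!
A PRN arrow leaving an `R`-node stays at the same gene and an arrow leaving a `P`-node enters an
`R`-node, so a path of the PRN from an `R`-node to a `P`-node is exactly the lift
`(v₁,R) → (v₁,P) → ⋯ → (v_m,R) → (v_m,P)` of a path of the GRN. Hence `(v,R)` and `(v,P)` are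
appendage nodes of the PRN iff `v` is an appendage node of the GRN, and removing the first and
last node from the lift of an appendage path `σ₁ → ⋯ → σ₂` leaves an appendage path from `(σ₁,P)`
to `(σ₂,R)`.
-/

open List Relation

/- In the PRN on `V × Bool`, the node `(v, false)` is the mRNA node `v^R`
   and `(v, true)` is the protein node `v^P`. -/

/-- Arrow relation of the PRN associated to a GRN with arrow relation `E`:
arrows `(v,R) → (v,P)` for every `v`, and `(u,P) → (v,R)` whenever `E u v`. -/
def prnAdj {V : Type*} (E : V → V → Prop) : V × Bool → V × Bool → Prop :=
  fun a b =>
    (a.1 = b.1 ∧ a.2 = false ∧ b.2 = true) ∨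
    (E a.1 b.1 ∧ a.2 = true ∧ b.2 = false)

/-- The lift of a path `σ₁ → ⋯ → σ_m` in the GRN to the path
`(σ₁,R) → (σ₁,P) → ⋯ → (σ_m,R) → (σ_m,P)` in the PRN. -/
def liftPath {V : Type*} (l : List V) : List (V × Bool) :=
  l.flatMap fun v => [(v, false), (v, true)]

/-- A simple path: a nonempty directed path visiting each node at most once. -/
def IsSimplePath {V : Type*} (E : V → V → Prop) (l : List V) : Prop :=
  l ≠ [] ∧ l.Chain' E ∧ l.Nodup

/-- A simple path from `a` to `b`. -/
def IsSimplePathFrom {V : Type*} (E : V → V → Prop) (a b : V) (l : List V) : Prop :=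
  IsSimplePath E l ∧ l.head? = some a ∧ l.getLast? = some b

/-- A node is simple if it lies on some simple path from the input to the output. -/
def IsSimpleNode {V : Type*} (E : V → V → Prop) (ι o v : V) : Prop :=
  ∃ l, IsSimplePathFrom E ι o l ∧ v ∈ l

/-- A node is super-simple if it lies on every simple path from the input to the output. -/
def IsSuperSimpleNode {V : Type*} (E : V → V → Prop) (ι o v : V) : Prop :=
  ∀ l, IsSimplePathFrom E ι o l → v ∈ l

/-- A node is appendage if it lies on no simple path from the input to the output. -/
def IsAppendageNode {V : Type*} (E : V → V → Prop) (ι o v : V) : Prop :=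
  ¬ IsSimpleNode E ι o v

/-- An appendage path from `a` to `b`: a simple path from `a` to `b` each of whose
nodes, except possibly `a` and `b`, is an appendage node. -/
def IsAppendagePath {V : Type*} (E : V → V → Prop) (ι o a b : V) (l : List V) : Prop :=
  IsSimplePathFrom E a b l ∧ ∀ v ∈ l, v ≠ a → v ≠ b → IsAppendageNode E ι o v

/-- A directed cycle: a nonempty closed directed walk visiting each of its nodes
exactly once (a self-loop is a cycle of length one). -/
def IsCycle {V : Type*} (E : V → V → Prop) (c : List V) : Prop :=
  c ≠ [] ∧ c.Chain' E ∧ c.Nodup ∧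
    ∃ a b, c.head? = some a ∧ c.getLast? = some b ∧ E b a

/-- Arrow relation of the appendage subnetwork: the induced subgraph on appendage nodes. -/
def appendageAdj {V : Type*} (E : V → V → Prop) (ι o : V) : V → V → Prop :=
  fun a b => E a b ∧ IsAppendageNode E ι o a ∧ IsAppendageNode E ι o b

/-- Two appendage nodes are path-equivalent if each is reachable from the other by a
directed path lying entirely within the appendage subnetwork. -/
def PathEquiv {V : Type*} (E : V → V → Prop) (ι o a b : V) : Prop :=
  Relation.ReflTransGen (appendageAdj E ι o) a b ∧
  Relation.ReflTransGen (appendageAdj E ι o) b a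

/-- A node `x` is between `a` and `b` if some input-to-output simple path visits
`a`, `x`, `b` in that order. -/
def Between {V : Type*} (E : V → V → Prop) (ι o a x b : V) : Prop :=
  ∃ l, IsSimplePathFrom E ι o l ∧ [a, x, b].Sublist l

section LiftPath

variable {V : Type*} {E : V → V → Prop}

@[simp]
lemma liftPath_nil : liftPath ([] : List V) = [] := rfl

@[simp]
lemma liftPath_cons (a : V) (l : List V) :
    liftPath (a :: l) = (a, false) :: (a, true) :: liftPath l := rfl

@[simp]
lemma liftPath_append (l₁ l₂ : List V) : liftPath (l₁ ++ l₂) = liftPath l₁ ++ liftPath l₂ :=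
  flatMap_append

@[simp]
lemma liftPath_eq_nil_iff {l : List V} : liftPath l = [] ↔ l = [] := by
  cases l <;> simp

@[simp]
lemma mem_liftPath {x : V × Bool} {l : List V} : x ∈ liftPath l ↔ x.1 ∈ l := by
  obtain ⟨v, b⟩ := x
  induction l with
  | nil => simp
  | cons a l ih => cases b <;> simp_all [eq_comm]

@[simp]
lemma nodup_liftPath_iff {l : List V} : (liftPath l).Nodup ↔ l.Nodup := by
  induction l with
  | nil => simp
  | cons a l ih => simp [ih]

@[simp]
lemma head?_liftPath (l : List V) : (liftPath l).head? = l.head?.map (·, false) := by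
  cases l <;> simp

@[simp]
lemma getLast?_liftPath (l : List V) : (liftPath l).getLast? = l.getLast?.map (·, true) := by
  induction l using List.reverseRecOn <;> simp [liftPath]

lemma isChain_liftPath_iff {l : List V} : (liftPath l).IsChain (prnAdj E) ↔ l.IsChain E := by
  induction l with
  | nil => simp
  | cons a l ih =>
    cases l with
    | nil => simp [prnAdj]
    | cons b l => simp_all [isChain_cons_cons, prnAdj]

theorem exists_eq_liftPath_of_isChain : ∀ {L : List (V × Bool)}, L.IsChain (prnAdj E) →
    (∀ x ∈ L.head?, x.2 = false) → (∀ x ∈ L.getLast?, x.2 = true) → ∃ l, L = liftPath l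
  | [], _, _, _ => ⟨[], rfl⟩
  | [x], _, hhead, hlast => by simp_all
  | (v, b) :: (w, c) :: L, hchain, hhead, hlast => by
    obtain rfl : b = false := by simpa using hhead
    obtain ⟨rfl, rfl⟩ : v = w ∧ c = true := by
      simpa [prnAdj] using (isChain_cons_cons.1 hchain).1
    have hchain' := (isChain_cons_cons.1 hchain).2
    cases L with
    | nil => exact ⟨[v], rfl⟩
    | cons y L =>
      obtain ⟨-, hy⟩ : E v y.1 ∧ y.2 = false := by
        simpa [prnAdj] using (isChain_cons_cons.1 hchain').1
      obtain ⟨l, hl⟩ := exists_eq_liftPath_of_isChain (isChain_cons_cons.1 hchain').2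
        (by simpa using hy) (by simpa using hlast)
      exact ⟨v :: l, by simp [← hl]⟩

lemma isSimplePathFrom_liftPath_iff {a b : V} {l : List V} :
    IsSimplePathFrom (prnAdj E) (a, false) (b, true) (liftPath l) ↔ IsSimplePathFrom E a b l :=
  and_congr (and_congr liftPath_eq_nil_iff.not (and_congr isChain_liftPath_iff nodup_liftPath_iff))
    (and_congr (by simp) (by simp))

lemma isSimpleNode_prnAdj_iff {ι o v : V} {b : Bool} :
    IsSimpleNode (prnAdj E) (ι, false) (o, true) (v, b) ↔ IsSimpleNode E ι o v := by
  constructor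
  · rintro ⟨L, hL, hv⟩
    obtain ⟨l, rfl⟩ := exists_eq_liftPath_of_isChain hL.1.2.1 (by simp [hL.2.1])
      (by simp [hL.2.2])
    exact ⟨l, isSimplePathFrom_liftPath_iff.1 hL, mem_liftPath.1 hv⟩
  · rintro ⟨l, hl, hv⟩
    exact ⟨liftPath l, isSimplePathFrom_liftPath_iff.2 hl, mem_liftPath.2 hv⟩

lemma isAppendageNode_prnAdj_iff {ι o v : V} {b : Bool} :
    IsAppendageNode (prnAdj E) (ι, false) (o, true) (v, b) ↔ IsAppendageNode E ι o v :=
  isSimpleNode_prnAdj_iff.not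

lemma exists_eq_cons_append_singleton {a b : V} {l : List V} (hhead : l.head? = some a)
    (hlast : l.getLast? = some b) (hab : a ≠ b) : ∃ m, l = a :: (m ++ [b]) := by
  rcases eq_nil_or_concat l with rfl | ⟨l', c, rfl⟩
  · simp at hhead
  obtain rfl : c = b := by simpa using hlast
  cases l' with
  | nil => exact absurd (by simpa using hhead) hab.symm
  | cons d m =>
    obtain rfl : d = a := by simpa using hhead
    exact ⟨m, by simp⟩

theorem IsAppendagePath.exists_prnAdj {ι o a b : V} {l : List V}
    (h : IsAppendagePath E ι o a b l) (hab : a ≠ b) :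
    ∃ L, IsAppendagePath (prnAdj E) (ι, false) (o, true) (a, true) (b, false) L := by
  obtain ⟨⟨⟨-, hchain, hnodup⟩, hhead, hlast⟩, happ⟩ := h
  obtain ⟨m, rfl⟩ := exists_eq_cons_append_singleton hhead hlast hab
  have hinfix : (a, true) :: liftPath m ++ [(b, false)] <:+: liftPath (a :: (m ++ [b])) :=
    ⟨[(a, false)], [(b, true)], by simp⟩
  refine ⟨_, ⟨⟨by simp, (isChain_liftPath_iff.2 hchain).infix hinfix,
    (nodup_liftPath_iff.2 hnodup).sublist hinfix.sublist⟩, rfl, getLast?_concat ..⟩, ?_⟩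
  rintro ⟨v, c⟩ hv hva hvb
  have hvm : v ∈ m := by simp_all
  obtain ⟨ha, hmb⟩ := nodup_cons.1 hnodup
  have hva' : v ≠ a := fun h => ha (h ▸ mem_append_left _ hvm)
  have hvb' : v ≠ b := (nodup_append.1 hmb).2.2 v hvm b (mem_singleton_self b)
  exact isAppendageNode_prnAdj_iff.2 (happ v (by simp [hvm]) hva' hvb')

end LiftPath

theorem stmt_9_general {V : Type*} (E : V → V → Prop) (ι o σ₁ σ₂ : V)
    (hne : σ₁ ≠ σ₂)
    (h₁ : IsAppendageNode E ι o σ₁) (h₂ : IsAppendageNode E ι o σ₂)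
    (hpath : ∃ l, IsAppendagePath E ι o σ₁ σ₂ l) :
    IsAppendageNode (prnAdj E) (ι, false) (o, true) (σ₁, true) ∧
    IsAppendageNode (prnAdj E) (ι, false) (o, true) (σ₂, false) ∧
    ∃ L, IsAppendagePath (prnAdj E) (ι, false) (o, true) (σ₁, true) (σ₂, false) L := by
  obtain ⟨l, hl⟩ := hpath
  exact ⟨isAppendageNode_prnAdj_iff.2 h₁, isAppendageNode_prnAdj_iff.2 h₂, hl.exists_prnAdj hne⟩

/-- If `σ₁ ≠ σ₂` are appendage nodes of the GRN and there is an
appendage path from `σ₁` to `σ₂` in the GRN, then `(σ₁,P)` and `(σ₂,R)` are appendage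
nodes of the PRN and there is an appendage path from `(σ₁,P)` to `(σ₂,R)` in the PRN. -/
theorem stmt_9 {V : Type*} [Fintype V] (E : V → V → Prop) (ι o σ₁ σ₂ : V)
    (hne : σ₁ ≠ σ₂)
    (h₁ : IsAppendageNode E ι o σ₁) (h₂ : IsAppendageNode E ι o σ₂)
    (hpath : ∃ l, IsAppendagePath E ι o σ₁ σ₂ l) :
    IsAppendageNode (prnAdj E) (ι, false) (o, true) (σ₁, true) ∧
    IsAppendageNode (prnAdj E) (ι, false) (o, true) (σ₂, false) ∧
    ∃ L, IsAppendagePath (prnAdj E) (ι, false) (o, true) (σ₁, true) (σ₂, false) L :=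
  stmt_9_general E ι o σ₁ σ₂ hne h₁ h₂ hpath
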